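/- arXiv:2011.11222 — 4 statements merged into one kernel-verified Lean document; each statement's English description precedes it below -/
import Mathlib

section
/- For distinct reals a and b, the difference quotient of the logistic function satisfies α(a,b) := (μ(b) - μ(a))/(b - a) ≥ μ'(a)/(1 + |b - a|). -/
/-!
Write `σ` for the logistic function. Since `(1 - σ z) / σ z = exp (-z)`, the increment factors as
`σ b - σ a = σ b (1 - σ a) (1 - exp (a - b))`. For `a < b` and `t = b - a`, the bound
`(1 - exp (-t)) / t ≥ 1 / (1 + t)`, which is `1 + t ≤ exp t` in disguise, turns this into
`(σ b - σ a) / (b - a) ≥ σ b (1 - σ a) / (1 + t)`. By monotonicity of `σ`, the factor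
`σ b (1 - σ a)` dominates both `σ' a = σ a (1 - σ a)` and `σ' b = σ b (1 - σ b)`; since the
difference quotient is symmetric in `a` and `b`, this handles both orders of the endpoints.
-/

noncomputable def logistic (z : ℝ) : ℝ := 1 / (1 + Real.exp (-z))

open Real

theorem logistic_eq_sigmoid : logistic = sigmoid := by
  funext z
  rw [logistic, sigmoid_def, one_div]

namespace Real

theorem sigmoid_sub_sigmoid (a b : ℝ) :
    sigmoid b - sigmoid a = sigmoid b * (1 - sigmoid a) * (1 - exp (a - b)) := by
  simp only [sigmoid_def, exp_sub, exp_neg]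
  field_simp
  ring

theorem one_div_one_add_le_one_sub_exp_neg_div {t : ℝ} (ht : 0 < t) :
    1 / (1 + t) ≤ (1 - exp (-t)) / t := by
  have hexp : (1 + t) * exp (-t) ≤ 1 := by
    calc (1 + t) * exp (-t) ≤ exp t * exp (-t) := by
          gcongr
          linarith [add_one_le_exp t]
      _ = 1 := by rw [← exp_add, add_neg_cancel, exp_zero]
  rw [div_le_div_iff₀ (by positivity) ht]
  linarith

theorem sigmoid_mul_one_sub_sigmoid_div_le_slope {a b : ℝ} (hab : a < b) :
    sigmoid b * (1 - sigmoid a) / (1 + (b - a)) ≤ (sigmoid b - sigmoid a) / (b - a) := by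
  have hfactor : 0 ≤ sigmoid b * (1 - sigmoid a) :=
    mul_nonneg (sigmoid_nonneg b) (sub_nonneg.mpr (sigmoid_le_one a))
  calc sigmoid b * (1 - sigmoid a) / (1 + (b - a))
      = sigmoid b * (1 - sigmoid a) * (1 / (1 + (b - a))) := by rw [mul_one_div]
    _ ≤ sigmoid b * (1 - sigmoid a) * ((1 - exp (-(b - a))) / (b - a)) :=
        mul_le_mul_of_nonneg_left (one_div_one_add_le_one_sub_exp_neg_div (sub_pos.mpr hab)) hfactor
    _ = (sigmoid b - sigmoid a) / (b - a) := by
        rw [sigmoid_sub_sigmoid, neg_sub, mul_div_assoc]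

end Real

theorem stmt_5 (a b : ℝ) (hab : a ≠ b) :
    (logistic b - logistic a) / (b - a) ≥ deriv logistic a / (1 + |b - a|) := by
  rw [logistic_eq_sigmoid, deriv_sigmoid, ge_iff_le]
  rcases hab.lt_or_gt with hlt | hgt
  · rw [abs_of_pos (sub_pos.mpr hlt)]
    calc sigmoid a * (1 - sigmoid a) / (1 + (b - a))
        ≤ sigmoid b * (1 - sigmoid a) / (1 + (b - a)) := by
          have hmono := sigmoid_le hlt.le
          gcongr
          exact sub_nonneg.mpr (sigmoid_le_one a)
      _ ≤ (sigmoid b - sigmoid a) / (b - a) := sigmoid_mul_one_sub_sigmoid_div_le_slope hlt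
  · rw [abs_sub_comm, abs_of_pos (sub_pos.mpr hgt)]
    calc sigmoid a * (1 - sigmoid a) / (1 + (a - b))
        ≤ sigmoid a * (1 - sigmoid b) / (1 + (a - b)) := by
          have hmono := sigmoid_le hgt.le
          gcongr
          exact sigmoid_nonneg a
      _ ≤ (sigmoid a - sigmoid b) / (a - b) := sigmoid_mul_one_sub_sigmoid_div_le_slope hgt
      _ = (sigmoid b - sigmoid a) / (b - a) := by rw [← neg_div_neg_eq, neg_sub, neg_sub]
end

section
/- Let D ∈ ℝ with 0 ≤ D ≤ 3/5 and define Q := max{D/(1+D), (e^D - 1 - D)/D} (with Q = 0 when D = 0). Then (1+D)·Q ≤ D. -/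
open Real

lemma Real.exp_le_quartic_taylor {x : ℝ} (h0 : 0 ≤ x) (h1 : x ≤ 1) :
    exp x ≤ 1 + x + x ^ 2 / 2 + x ^ 3 / 6 + 5 * x ^ 4 / 96 := by
  have h := exp_bound' h0 h1 (n := 4) (by norm_num)
  norm_num [Finset.sum_range_succ, Nat.factorial] at h
  linarith

/-- After the quartic Taylor bound this reduces to `(1 + D) (1/2 + D/6 + 5 D²/96) ≤ 1`,
whose left side is increasing and equals `0.99` at `D = 3/5`. -/
lemma Real.exp_sub_one_sub_div_le_div_one_add {D : ℝ} (h0 : 0 ≤ D) (h1 : D ≤ 3 / 5) :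
    (exp D - 1 - D) / D ≤ D / (1 + D) := by
  rcases h0.eq_or_lt with rfl | hD
  · simp
  have hexp := exp_le_quartic_taylor h0 (by linarith)
  rw [div_le_div_iff₀ hD (by linarith)]
  nlinarith [mul_nonneg (pow_pos hD 3).le (by linarith : 0 ≤ 3 / 5 - D)]

theorem stmt_8 (D : ℝ) (h0 : 0 ≤ D) (h1 : D ≤ 3 / 5) :
    (1 + D) * max (D / (1 + D)) ((Real.exp D - 1 - D) / D) ≤ D := by
  have hD1 : 0 < 1 + D := by linarith
  rw [mul_max_of_nonneg _ _ hD1.le, mul_div_cancel₀ _ hD1.ne']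
  refine max_le le_rfl ?_
  calc (1 + D) * ((exp D - 1 - D) / D)
      ≤ (1 + D) * (D / (1 + D)) :=
        mul_le_mul_of_nonneg_left (exp_sub_one_sub_div_le_div_one_add h0 h1) hD1.le
    _ = D := mul_div_cancel₀ _ hD1.ne'
end

section
/- Suppose a > 0, b > 2, c > 0, d ≥ 0, and t ≥ max{(2a)²·(ln((2a)²/c) + ln b + d)², 2c}. Then √t ≥ a·(log(b + t/c) + d). -/
/-!
Write `s = √t` and `L = log ((2a)² / c) + log b + d`. Since `t/c ≥ 2` and `b ≥ 2`,
`log (b + t/c) ≤ log b + log (t/c)`, and `log (t/c) = log ((2a)²/c) + log (t/(2a)²)`, so the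
left side is at most `a L + a log (t/(2a)²)`. The first term is at most `s/2` because
`t ≥ (2aL)²`, and the second is `2a log (s/(2a)) ≤ s/2` because `2 log u ≤ u`.
-/

namespace Real

theorem log_add_le_log_add_log {x y : ℝ} (hx : 2 ≤ x) (hy : 2 ≤ y) :
    log (x + y) ≤ log x + log y := by
  rw [← log_mul (by positivity) (by positivity)]
  exact log_le_log (by positivity) (by nlinarith)

theorem two_mul_log_le_self {x : ℝ} (hx : 0 ≤ x) : 2 * log x ≤ x := by
  rcases hx.eq_or_lt with rfl | hx
  · simp
  -- `e log x ≤ x`, and `e > 2`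
  have h := exp_one_mul_le_exp (x := log x)
  rw [exp_log hx] at h
  rcases le_or_gt (log x) 0 with hlog | hlog
  · linarith
  · nlinarith [exp_one_gt_d9]

theorem mul_log_div_sq_le {a t : ℝ} (ha : 0 < a) (ht : 0 ≤ t) :
    a * log (t / (2 * a) ^ 2) ≤ √t / 2 := by
  have hsq : t / (2 * a) ^ 2 = (√t / (2 * a)) ^ 2 := by rw [div_pow, sq_sqrt ht]
  have key := two_mul_log_le_self (x := √t / (2 * a)) (by positivity)
  calc a * log (t / (2 * a) ^ 2) = a * (2 * log (√t / (2 * a))) := by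
        rw [hsq, log_pow]; push_cast; ring
    _ ≤ a * (√t / (2 * a)) := by gcongr
    _ = √t / 2 := by field_simp

end Real

theorem stmt_17_general (a b c d t : ℝ) (ha : 0 < a) (hb : 2 < b) (hc : 0 < c)
    (ht : max ((2 * a) ^ 2 * (Real.log ((2 * a) ^ 2 / c) + Real.log b + d) ^ 2) (2 * c) ≤ t) :
    Real.sqrt t ≥ a * (Real.log (b + t / c) + d) := by
  set L := Real.log ((2 * a) ^ 2 / c) + Real.log b + d
  obtain ⟨hLt, h2c⟩ := max_le_iff.mp ht
  have htc : 2 ≤ t / c := by rwa [le_div_iff₀ hc]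
  have htpos : 0 < t := by linarith
  have hL : a * L ≤ √t / 2 := by
    have : 2 * a * L ≤ √t := Real.le_sqrt_of_sq_le (by linarith [mul_pow (2 * a) L 2])
    linarith
  have hsplit : Real.log (t / c) = Real.log ((2 * a) ^ 2 / c) + Real.log (t / (2 * a) ^ 2) := by
    rw [← Real.log_mul (by positivity) (by positivity)]
    congr 1
    field_simp
  calc a * (Real.log (b + t / c) + d) ≤ a * (Real.log b + Real.log (t / c) + d) := by
        gcongr
        exact Real.log_add_le_log_add_log hb.le htc
    _ = a * L + a * Real.log (t / (2 * a) ^ 2) := by rw [hsplit]; ring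
    _ ≤ √t / 2 + √t / 2 := add_le_add hL (Real.mul_log_div_sq_le ha htpos.le)
    _ = √t := add_halves _

theorem stmt_17 (a b c d t : ℝ) (ha : 0 < a) (hb : 2 < b) (hc : 0 < c) (hd : 0 ≤ d)
    (ht : max ((2 * a) ^ 2 * (Real.log ((2 * a) ^ 2 / c) + Real.log b + d) ^ 2) (2 * c) ≤ t) :
    Real.sqrt t ≥ a * (Real.log (b + t / c) + d) :=
  stmt_17_general a b c d t ha hb hc ht
end

section
/- Let u = arctan(√(2/(1+ε))) for ε ∈ (0, 1/2], and let a, a' be unit vectors in ℝ^{d−1} with |a^T a'| ≤ ε. Set z = (cos u, sin(u)·a) and θ/S = (−cos u, sin(u)·a') in ℝ^d. Then z^T(θ/S) ∈ [−(1+3ε)/(3+ε), (ε−1)/(3+ε)]; moreover if a = a' then z^T(θ/S) = (1−ε)/(3+ε) > 0. -/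
/-!
With `x = √(2/(1+ε))` one has `cos² u = 1/(1+x²) = (1+ε)/(3+ε)` and
`sin² u = x²/(1+x²) = 2/(3+ε)`, so the inner product equals `(2t - (1+ε))/(3+ε)` with
`t = aᵀa'`. This is increasing in `t`; evaluating it at `t = ±ε` gives the two endpoints
and at `t = 1` the value `(1-ε)/(3+ε)`.
-/

open Real

theorem neg_cos_sq_add_sin_sq_mul_arctan (y t : ℝ) :
    cos (arctan y) * (-cos (arctan y)) + sin (arctan y) * sin (arctan y) * t
      = (y ^ 2 * t - 1) / (1 + y ^ 2) := by
  calc cos (arctan y) * (-cos (arctan y)) + sin (arctan y) * sin (arctan y) * t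
      = -cos (arctan y) ^ 2 + sin (arctan y) ^ 2 * t := by ring
    _ = (y ^ 2 * t - 1) / (1 + y ^ 2) := by
      rw [cos_sq_arctan, sin_sq_arctan]; field_simp; ring

theorem neg_cos_sq_add_sin_sq_mul_arctan_sqrt_two_div {ε u : ℝ} (hε : 0 < 1 + ε)
    (hu : u = arctan √(2 / (1 + ε))) (t : ℝ) :
    cos u * (-cos u) + sin u * sin u * t = (2 * t - (1 + ε)) / (3 + ε) := by
  have h3ε : (0 : ℝ) < 3 + ε := by linarith
  rw [hu, neg_cos_sq_add_sin_sq_mul_arctan, sq_sqrt (by positivity)]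
  field_simp
  ring

theorem stmt_19_general (d : ℕ) (ε : ℝ) (hε : 0 < ε) (hε2 : ε ≤ 1 / 2)
    (a a' : EuclideanSpace ℝ (Fin d)) (ha : ‖a‖ = 1)
    (u : ℝ) (hu : u = Real.arctan (Real.sqrt (2 / (1 + ε)))) :
    (|(inner ℝ a a' : ℝ)| ≤ ε →
      Real.cos u * (-Real.cos u) + Real.sin u * Real.sin u * (inner ℝ a a' : ℝ)
        ∈ Set.Icc (-((1 + 3 * ε) / (3 + ε))) ((ε - 1) / (3 + ε))) ∧
    (Real.cos u * (-Real.cos u) + Real.sin u * Real.sin u * (inner ℝ a a : ℝ)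
        = (1 - ε) / (3 + ε)) ∧
    (0 : ℝ) < (1 - ε) / (3 + ε) := by
  have h3ε : (0 : ℝ) < 3 + ε := by linarith
  have hvalue := neg_cos_sq_add_sin_sq_mul_arctan_sqrt_two_div (by linarith) hu
  refine ⟨fun hab => ?_, ?_, div_pos (by linarith) h3ε⟩
  · obtain ⟨hlow, hhigh⟩ := abs_le.mp hab
    rw [hvalue, ← neg_div, Set.mem_Icc, div_le_div_iff_of_pos_right h3ε,
      div_le_div_iff_of_pos_right h3ε]
    constructor <;> linarith
  · rw [hvalue, real_inner_self_eq_norm_sq, ha]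
    ring

theorem stmt_19 (d : ℕ) (ε S : ℝ) (hε : 0 < ε) (hε2 : ε ≤ 1 / 2) (hS : 0 < S)
    (a a' : EuclideanSpace ℝ (Fin d)) (ha : ‖a‖ = 1) (ha' : ‖a'‖ = 1)
    (u : ℝ) (hu : u = Real.arctan (Real.sqrt (2 / (1 + ε)))) :
    (|(inner ℝ a a' : ℝ)| ≤ ε →
      Real.cos u * (-Real.cos u) + Real.sin u * Real.sin u * (inner ℝ a a' : ℝ)
        ∈ Set.Icc (-((1 + 3 * ε) / (3 + ε))) ((ε - 1) / (3 + ε))) ∧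
    (Real.cos u * (-Real.cos u) + Real.sin u * Real.sin u * (inner ℝ a a : ℝ)
        = (1 - ε) / (3 + ε)) ∧
    (0 : ℝ) < (1 - ε) / (3 + ε) :=
  stmt_19_general d ε hε hε2 a a' ha u hu
end
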